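/- Let τ ∈ (0,1), κ > 0, A ∈ ℝ^{n×p} with rows A₁,…,Aₙ and with every column having Euclidean norm at most √n, b ∈ ℝⁿ, and let L_n(x) = (1/n)·Σ_{i=1}^{n} ρ_{τ,κ}(bᵢ − Aᵢᵀx). Let (x^{(k)}, S^{(k)}) be iterates of fully corrective greedy selection (generalized OMP): S^{(0)} = ∅, x^{(0)} = 0, and for each k ≥ 1, S^{(k)} = S^{(k−1)} ∪ {i_k} where i_k maximizes |∂L_n/∂x_i(x^{(k−1)})| over i ∈ {1,…,p}, and x^{(k)} minimizes L_n over all vectors supported on S^{(k)}. Then for every reference vector x̃ ∈ ℝᵖ and every ε > 0, if k ≥ 2‖x̃‖₁²/(κ·ε), then L_n(x^{(k)}) − L_n(x̃) ≤ ε. -/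

import Mathlib

/-!
Write `d k = L(x k) - L(x̃)` and `B = ‖x̃‖₁`. Since `x (k+1)` minimises `L` over the vectors
supported on `S (k+1)`, the partial derivatives of `L` at `x (k+1)` vanish on `S (k+1)`, so
`⟨∇L(x k), x k⟩ = 0` and convexity gives `d k ≤ ‖∇L(x k)‖_∞ B = |∂_{i_k} L(x k)| B`.
The columns of `A` have norm at most `√n`, so `L` is `1/κ`-smooth along each coordinate, and the
step `-κ ∂_{i_k} L(x k)` in the selected coordinate, admissible at step `k+1`, lowers `L` by
`κ (∂_{i_k} L)² / 2 ≥ κ d_k² / (2B²)`. The recursion `d (k+1) ≤ d k - κ d_k² / (2B²)` forces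
`d k ≤ 2B² / (κ k)`.

Convexity and smoothness of `ρ_{τ,κ}` come from `ρ(x) = max_{g ∈ [-τ, 1-τ]} (g x - κ g² / 2)`,
the maximum being attained at `ρ'(x)`, the projection of `x / κ` onto `[-τ, 1-τ]`.
-/

/-- The quantile Huber penalty with quantile parameter `τ` and smoothing parameter `κ`. -/
noncomputable def qHuber (τ κ x : ℝ) : ℝ :=
  if x < -(τ * κ) then τ * |x| - κ * τ ^ 2 / 2
  else if x ≤ (1 - τ) * κ then x ^ 2 / (2 * κ)
  else (1 - τ) * |x| - κ * (1 - τ) ^ 2 / 2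

/-- The partial derivative of `f : (Fin p → ℝ) → ℝ` in the `i`-th coordinate at `x`. -/
noncomputable def pder {p : ℕ} (f : (Fin p → ℝ) → ℝ) (x : Fin p → ℝ) (i : Fin p) : ℝ :=
  deriv (fun t => f (Function.update x i t)) (x i)

noncomputable def qHuberDeriv (τ κ x : ℝ) : ℝ := max (-τ) (min (1 - τ) (x / κ))

lemma sub_max_min_mul_sub_max_min_nonpos {a b t g : ℝ} (hg : g ∈ Set.Icc a b) :
    (g - max a (min b t)) * (t - max a (min b t)) ≤ 0 := by
  obtain ⟨hag, hgb⟩ := hg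
  rcases le_total t a with hta | hat
  · rw [min_eq_right (by linarith), max_eq_left hta]; nlinarith
  rcases le_total t b with htb | hbt
  · rw [min_eq_right htb, max_eq_right hat, sub_self, mul_zero]
  · rw [min_eq_left hbt, max_eq_right (by linarith)]; nlinarith

lemma hasDerivAt_of_abs_sub_le_mul_sq {f : ℝ → ℝ} {f' x C : ℝ}
    (h : ∀ y, |f y - f x - f' * (y - x)| ≤ C * (y - x) ^ 2) : HasDerivAt f f' x := by
  rw [hasDerivAt_iff_isLittleO]
  refine Asymptotics.IsBigO.trans_isLittleO ?_ (Asymptotics.isLittleO_pow_sub_sub x one_lt_two)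
  refine Asymptotics.IsBigO.of_bound C (Filter.Eventually.of_forall fun y => ?_)
  simpa [Real.norm_eq_abs, mul_comm f'] using h y

section qHuber
variable {τ κ : ℝ}

lemma qHuberDeriv_mem_Icc (τ κ x : ℝ) : qHuberDeriv τ κ x ∈ Set.Icc (-τ) (1 - τ) :=
  ⟨le_max_left _ _, max_le (by linarith) (min_le_left _ _)⟩

lemma sub_qHuberDeriv_mul_sub_nonpos (hκ : 0 < κ) (x : ℝ) {g : ℝ}
    (hg : g ∈ Set.Icc (-τ) (1 - τ)) :
    (g - qHuberDeriv τ κ x) * (x - κ * qHuberDeriv τ κ x) ≤ 0 := by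
  have hx : x - κ * qHuberDeriv τ κ x = κ * (x / κ - qHuberDeriv τ κ x) := by
    field_simp
  rw [hx, mul_left_comm]
  exact mul_nonpos_of_nonneg_of_nonpos hκ.le (sub_max_min_mul_sub_max_min_nonpos hg)

variable (hτ : τ ∈ Set.Ioo (0 : ℝ) 1) (hκ : 0 < κ)
include hτ hκ

lemma qHuber_eq_qHuberDeriv_mul_sub (x : ℝ) :
    qHuber τ κ x = qHuberDeriv τ κ x * x - κ * qHuberDeriv τ κ x ^ 2 / 2 := by
  obtain ⟨hτ0, hτ1⟩ := hτ
  unfold qHuber qHuberDeriv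
  split_ifs with h₁ h₂
  · rw [min_eq_right (by rw [div_le_iff₀ hκ]; nlinarith),
      max_eq_left (by rw [div_le_iff₀ hκ]; linarith), abs_of_neg (by nlinarith)]
    ring
  · rw [min_eq_right (by rw [div_le_iff₀ hκ]; linarith),
      max_eq_right (by rw [le_div_iff₀ hκ]; linarith)]
    field_simp
    ring
  · rw [min_eq_left (by rw [le_div_iff₀ hκ]; linarith), max_eq_right (by linarith),
      abs_of_pos (by nlinarith)]

lemma qHuber_add_qHuberDeriv_mul_sub_le (x y : ℝ) :
    qHuber τ κ x + qHuberDeriv τ κ x * (y - x) ≤ qHuber τ κ y := by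
  have hvar := sub_qHuberDeriv_mul_sub_nonpos hκ y (qHuberDeriv_mem_Icc τ κ x)
  rw [qHuber_eq_qHuberDeriv_mul_sub hτ hκ x, qHuber_eq_qHuberDeriv_mul_sub hτ hκ y]
  nlinarith [sq_nonneg (qHuberDeriv τ κ y - qHuberDeriv τ κ x)]

lemma qHuber_le_add_qHuberDeriv_mul_sub_add_sq (x y : ℝ) :
    qHuber τ κ y ≤ qHuber τ κ x + qHuberDeriv τ κ x * (y - x) + (y - x) ^ 2 / (2 * κ) := by
  have hvar := sub_qHuberDeriv_mul_sub_nonpos hκ x (qHuberDeriv_mem_Icc τ κ y)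
  rw [qHuber_eq_qHuberDeriv_mul_sub hτ hκ x, qHuber_eq_qHuberDeriv_mul_sub hτ hκ y]
  set g := qHuberDeriv τ κ x
  set g' := qHuberDeriv τ κ y
  have hsq : 0 ≤ (y - x - κ * (g' - g)) ^ 2 / (2 * κ) := by positivity
  have hexp : (y - x - κ * (g' - g)) ^ 2 / (2 * κ) =
      (y - x) ^ 2 / (2 * κ) - (g' - g) * (y - x) + κ * (g' - g) ^ 2 / 2 := by
    field_simp
    ring
  linarith

-- The two inequalities squeeze the first-order remainder between `0` and `(y - x)² / (2κ)`.
lemma hasDerivAt_qHuber (x : ℝ) : HasDerivAt (qHuber τ κ) (qHuberDeriv τ κ x) x := by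
  refine hasDerivAt_of_abs_sub_le_mul_sq (C := (2 * κ)⁻¹) fun y => abs_le.2 ⟨?_, ?_⟩
  · have := qHuber_add_qHuberDeriv_mul_sub_le hτ hκ x y
    have : 0 ≤ (2 * κ)⁻¹ * (y - x) ^ 2 := by positivity
    linarith
  · have := qHuber_le_add_qHuberDeriv_mul_sub_add_sq hτ hκ x y
    rw [div_eq_inv_mul] at this
    linarith

end qHuber

lemma sum_mul_update {ι R : Type*} [Fintype ι] [DecidableEq ι] [CommRing R] (a z : ι → R)
    (j : ι) (t : R) :
    ∑ i, a i * Function.update z j t i = ∑ i, a i * z i + a j * (t - z j) := by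
  have h : ∀ i, a i * Function.update z j t i =
      a i * z i + (Pi.single j (a j * (t - z j)) : ι → R) i := by
    intro i
    rcases eq_or_ne i j with rfl | hij
    · simp only [Function.update_self, Pi.single_eq_same]; ring
    · simp [hij]
  simp only [h, Finset.sum_add_distrib, Finset.sum_pi_single', Finset.mem_univ, if_true]

def FirstOrderConvex {p : ℕ} (f : (Fin p → ℝ) → ℝ) : Prop :=
  ∀ z y, f z + ∑ j, pder f z j * (y j - z j) ≤ f y

def CoordSmooth {p : ℕ} (κ : ℝ) (f : (Fin p → ℝ) → ℝ) : Prop :=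
  ∀ z j η, f (Function.update z j (z j + η)) ≤ f z + pder f z j * η + η ^ 2 / (2 * κ)

section empiricalLoss
variable {n p : ℕ} (φ : ℝ → ℝ) (A : Matrix (Fin n) (Fin p) ℝ) (b : Fin n → ℝ)

noncomputable def empiricalLoss (x : Fin p → ℝ) : ℝ :=
  (1 / (n : ℝ)) * ∑ i, φ (b i - ∑ j, A i j * x j)

lemma empiricalLoss_update (z : Fin p → ℝ) (j : Fin p) (t : ℝ) :
    empiricalLoss φ A b (Function.update z j t) =
      (1 / (n : ℝ)) * ∑ i, φ (b i - ∑ j', A i j' * z j' - A i j * (t - z j)) := by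
  simp only [empiricalLoss, sum_mul_update, sub_add_eq_sub_sub]

variable {φ} {φ' : ℝ → ℝ} (hφ : ∀ r, HasDerivAt φ (φ' r) r)
include hφ

lemma pder_empiricalLoss (z : Fin p → ℝ) (j : Fin p) :
    pder (empiricalLoss φ A b) z j =
      (1 / (n : ℝ)) * ∑ i, φ' (b i - ∑ j', A i j' * z j') * -A i j := by
  have hres : ∀ i, HasDerivAt (fun t => b i - ∑ j', A i j' * z j' - A i j * (t - z j))
      (-A i j) (z j) := fun i => by
    simpa using (((hasDerivAt_id (z j)).sub_const (z j)).const_mul (A i j)).const_sub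
      (b i - ∑ j', A i j' * z j')
  have hL := (HasDerivAt.fun_sum (u := Finset.univ) fun i _ =>
    (hφ _).comp (z j) (hres i)).const_mul (1 / (n : ℝ))
  simp only [sub_self, mul_zero, sub_zero] at hL
  simp only [pder, empiricalLoss_update]
  exact hL.deriv

lemma firstOrderConvex_empiricalLoss (hconv : ∀ r s, φ r + φ' r * (s - r) ≤ φ s) :
    FirstOrderConvex (empiricalLoss φ A b) := by
  intro z y
  set r : (Fin p → ℝ) → Fin n → ℝ := fun w i => b i - ∑ j, A i j * w j
  have hdiff : ∀ i, r y i - r z i = ∑ j, -A i j * (y j - z j) := fun i => by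
    simp only [r, neg_mul, Finset.sum_neg_distrib, mul_sub, Finset.sum_sub_distrib]
    ring
  have hdir : ∑ j, pder (empiricalLoss φ A b) z j * (y j - z j) =
      (1 / (n : ℝ)) * ∑ i, φ' (r z i) * (r y i - r z i) := by
    simp only [pder_empiricalLoss A b hφ, hdiff, Finset.mul_sum, Finset.sum_mul]
    rw [Finset.sum_comm]
    refine Finset.sum_congr rfl fun i _ => Finset.sum_congr rfl fun j _ => ?_
    ring
  calc empiricalLoss φ A b z + ∑ j, pder (empiricalLoss φ A b) z j * (y j - z j)
      = (1 / (n : ℝ)) * ∑ i, (φ (r z i) + φ' (r z i) * (r y i - r z i)) := by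
        rw [hdir, empiricalLoss, Finset.sum_add_distrib, mul_add]
    _ ≤ (1 / (n : ℝ)) * ∑ i, φ (r y i) := by
        gcongr with i
        exact hconv _ _
    _ = empiricalLoss φ A b y := rfl

lemma coordSmooth_empiricalLoss {κ : ℝ} (hκ : 0 ≤ κ)
    (hsmooth : ∀ r s, φ s ≤ φ r + φ' r * (s - r) + (s - r) ^ 2 / (2 * κ))
    (hcol : ∀ j, ∑ i, A i j ^ 2 ≤ n) : CoordSmooth κ (empiricalLoss φ A b) := by
  intro z j η
  rw [empiricalLoss_update, pder_empiricalLoss A b hφ, add_sub_cancel_left]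
  obtain ⟨r, hr⟩ : ∃ r : Fin n → ℝ, ∀ i, b i - ∑ j', A i j' * z j' = r i := ⟨_, fun _ => rfl⟩
  have hLz : empiricalLoss φ A b z = (1 / (n : ℝ)) * ∑ i, φ (r i) := by
    simp only [empiricalLoss, hr]
  simp only [hr]
  have hcol' : (1 / (n : ℝ)) * ∑ i, A i j ^ 2 ≤ 1 := by
    rw [one_div_mul_eq_div]
    exact div_le_one_of_le₀ (hcol j) n.cast_nonneg
  calc (1 / (n : ℝ)) * ∑ i, φ (r i - A i j * η)
      ≤ (1 / (n : ℝ)) * ∑ i,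
          (φ (r i) + φ' (r i) * -A i j * η + A i j ^ 2 * (η ^ 2 / (2 * κ))) := by
        gcongr with i
        exact (hsmooth (r i) (r i - A i j * η)).trans_eq (by ring)
    _ = empiricalLoss φ A b z + ((1 / (n : ℝ)) * ∑ i, φ' (r i) * -A i j) * η +
          ((1 / (n : ℝ)) * ∑ i, A i j ^ 2) * (η ^ 2 / (2 * κ)) := by
        simp only [Finset.sum_add_distrib, ← Finset.sum_mul, hLz]
        rw [mul_add, mul_add, mul_assoc, mul_assoc]
    _ ≤ empiricalLoss φ A b z + ((1 / (n : ℝ)) * ∑ i, φ' (r i) * -A i j) * η +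
          1 * (η ^ 2 / (2 * κ)) := by gcongr
    _ = _ := by rw [one_mul]

end empiricalLoss

lemma mul_natCast_mul_le_one_of_le_sub_mul_sq {c : ℝ} (hc : 0 ≤ c) {d : ℕ → ℝ}
    (hd : ∀ k, 0 < d (k + 1) → d (k + 1) ≤ d k - c * d k ^ 2) (k : ℕ) : c * k * d k ≤ 1 := by
  induction k with
  | zero => simp
  | succ k ih =>
    rcases le_or_gt (d (k + 1)) 0 with hle | hpos
    · have : 0 ≤ c * (k + 1 : ℕ) := by positivity
      nlinarith
    have hstep := hd k hpos
    have hdk : 0 < d k := by nlinarith [sq_nonneg (d k)]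
    have hu : c * d k < 1 := by nlinarith
    push_cast
    calc c * (k + 1) * d (k + 1) ≤ c * (k + 1) * (d k - c * d k ^ 2) := by gcongr
      _ = (c * k * d k) * (1 - c * d k) + c * d k * (1 - c * d k) := by ring
      _ ≤ 1 * (1 - c * d k) + c * d k * (1 - c * d k) := by gcongr
      _ ≤ 1 := by nlinarith [sq_nonneg (c * d k)]

structure IsFullyCorrectiveGreedy {p : ℕ} (f : (Fin p → ℝ) → ℝ) (S : ℕ → Finset (Fin p))
    (x : ℕ → Fin p → ℝ) (isel : ℕ → Fin p) : Prop where
  x_zero : x 0 = 0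
  S_succ : ∀ k, S (k + 1) = insert (isel k) (S k)
  abs_pder_le : ∀ k j, |pder f (x k) j| ≤ |pder f (x k) (isel k)|
  support_subset : ∀ k, ∀ j ∉ S (k + 1), x (k + 1) j = 0
  le_of_support_subset : ∀ k y, (∀ j ∉ S (k + 1), y j = 0) → f (x (k + 1)) ≤ f y

namespace IsFullyCorrectiveGreedy

variable {p : ℕ} {f : (Fin p → ℝ) → ℝ} {S : ℕ → Finset (Fin p)} {x : ℕ → Fin p → ℝ}
  {isel : ℕ → Fin p} (h : IsFullyCorrectiveGreedy f S x isel)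
include h

lemma eq_zero_of_notMem (k : ℕ) {j : Fin p} (hj : j ∉ S k) : x k j = 0 := by
  cases k with
  | zero => simp [h.x_zero]
  | succ k => exact h.support_subset k j hj

lemma le_update (k : ℕ) (t : ℝ) : f (x (k + 1)) ≤ f (Function.update (x k) (isel k) t) := by
  refine h.le_of_support_subset k _ fun j hj => ?_
  rw [h.S_succ, Finset.mem_insert, not_or] at hj
  rw [Function.update_of_ne hj.1, h.eq_zero_of_notMem k hj.2]

lemma antitone : Antitone (fun k => f (x k)) :=
  antitone_nat_of_succ_le fun k => by
    simpa using h.le_update k (x k (isel k))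

lemma pder_eq_zero (k : ℕ) {j : Fin p} (hj : j ∈ S (k + 1)) : pder f (x (k + 1)) j = 0 := by
  refine IsLocalMin.deriv_eq_zero (Filter.Eventually.of_forall fun t => ?_)
  dsimp only
  rw [Function.update_eq_self]
  refine h.le_of_support_subset k _ fun j' hj' => ?_
  rw [Function.update_of_ne (ne_of_mem_of_not_mem hj hj').symm, h.support_subset k j' hj']

lemma sum_pder_mul_eq_zero (k : ℕ) : ∑ j, pder f (x k) j * x k j = 0 := by
  refine Finset.sum_eq_zero fun j _ => ?_
  cases k with
  | zero => simp [h.x_zero]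
  | succ k =>
    by_cases hj : j ∈ S (k + 1)
    · rw [h.pder_eq_zero k hj, zero_mul]
    · rw [h.eq_zero_of_notMem _ hj, mul_zero]

lemma sub_le_abs_pder_mul (hconv : FirstOrderConvex f) (k : ℕ) (y : Fin p → ℝ) :
    f (x k) - f y ≤ |pder f (x k) (isel k)| * ∑ j, |y j| := by
  have hdir : ∑ j, pder f (x k) j * (y j - x k j) = ∑ j, pder f (x k) j * y j := by
    simp only [mul_sub, Finset.sum_sub_distrib, h.sum_pder_mul_eq_zero k, sub_zero]
  have hbound : -∑ j, pder f (x k) j * y j ≤ |pder f (x k) (isel k)| * ∑ j, |y j| := by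
    rw [← Finset.sum_neg_distrib, Finset.mul_sum]
    refine Finset.sum_le_sum fun j _ => ?_
    calc -(pder f (x k) j * y j) ≤ |pder f (x k) j| * |y j| := by
          rw [← abs_mul]; exact neg_le_abs _
      _ ≤ |pder f (x k) (isel k)| * |y j| :=
          mul_le_mul_of_nonneg_right (h.abs_pder_le k j) (abs_nonneg _)
  linarith [hconv (x k) y]

lemma le_sub_mul_pder_sq {κ : ℝ} (hsmooth : CoordSmooth κ f) (k : ℕ) :
    f (x (k + 1)) ≤ f (x k) - κ * pder f (x k) (isel k) ^ 2 / 2 := by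
  set g := pder f (x k) (isel k)
  calc f (x (k + 1)) ≤ f (Function.update (x k) (isel k) (x k (isel k) + -κ * g)) :=
        h.le_update k _
    _ ≤ f (x k) + g * (-κ * g) + (-κ * g) ^ 2 / (2 * κ) := hsmooth _ _ _
    _ = f (x k) - κ * g ^ 2 / 2 := by field_simp; ring

lemma sub_succ_le (hconv : FirstOrderConvex f) {κ : ℝ} (hκ : 0 ≤ κ) (hsmooth : CoordSmooth κ f)
    (y : Fin p → ℝ) (hy : 0 < ∑ j, |y j|) (k : ℕ) (hpos : 0 < f (x (k + 1)) - f y) :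
    f (x (k + 1)) - f y ≤
      (f (x k) - f y) - κ / (2 * (∑ j, |y j|) ^ 2) * (f (x k) - f y) ^ 2 := by
  set B := ∑ j, |y j|
  set G := |pder f (x k) (isel k)|
  have hgap : f (x k) - f y ≤ G * B := h.sub_le_abs_pder_mul hconv k y
  have hdk : 0 < f (x k) - f y := hpos.trans_le (by linarith [h.antitone (Nat.le_succ k)])
  have hsq : (f (x k) - f y) ^ 2 ≤ (G * B) ^ 2 := pow_le_pow_left₀ hdk.le hgap 2
  have hdecr : κ / (2 * B ^ 2) * (f (x k) - f y) ^ 2 ≤ κ * G ^ 2 / 2 := by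
    calc κ / (2 * B ^ 2) * (f (x k) - f y) ^ 2 ≤ κ / (2 * B ^ 2) * (G * B) ^ 2 := by gcongr
      _ = κ * G ^ 2 / 2 := by field_simp
  have hprog := h.le_sub_mul_pder_sq hsmooth k
  rw [← sq_abs] at hprog
  linarith

theorem sub_le_of_le_natCast (hconv : FirstOrderConvex f) {κ : ℝ} (hκ : 0 < κ)
    (hsmooth : CoordSmooth κ f) (y : Fin p → ℝ) {ε : ℝ} (hε : 0 < ε) {k : ℕ}
    (hk : 2 * (∑ j, |y j|) ^ 2 / (κ * ε) ≤ k) :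
    f (x k) - f y ≤ ε := by
  set B := ∑ j, |y j|
  rcases (Finset.sum_nonneg fun j _ => abs_nonneg (y j) : 0 ≤ B).eq_or_lt with hB | hB
  · have := h.sub_le_abs_pder_mul hconv k y
    rw [← hB, mul_zero] at this
    linarith
  set c := κ / (2 * B ^ 2)
  have hck : c * k * (f (x k) - f y) ≤ 1 :=
    mul_natCast_mul_le_one_of_le_sub_mul_sq (d := fun m => f (x m) - f y) (by positivity)
      (h.sub_succ_le hconv hκ.le hsmooth y hB) k
  rcases le_or_gt (f (x k) - f y) 0 with hle | hpos
  · linarith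
  have hk' : 1 / ε ≤ c * k :=
    calc 1 / ε = c * (2 * B ^ 2 / (κ * ε)) := by
          have : B ≠ 0 := hB.ne'
          simp only [c]
          field_simp
      _ ≤ c * k := by gcongr
  rw [← div_le_one hε]
  calc (f (x k) - f y) / ε = 1 / ε * (f (x k) - f y) := by ring
    _ ≤ c * k * (f (x k) - f y) := by gcongr
    _ ≤ 1 := hck

end IsFullyCorrectiveGreedy

theorem omp_qHuber_convergence_general (n p : ℕ) (τ κ : ℝ)
    (hτ : τ ∈ Set.Ioo (0 : ℝ) 1) (hκ : 0 < κ)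
    (A : Matrix (Fin n) (Fin p) ℝ) (b : Fin n → ℝ)
    (hcol : ∀ j : Fin p, Real.sqrt (∑ i, (A i j) ^ 2) ≤ Real.sqrt n)
    (Ln : (Fin p → ℝ) → ℝ)
    (hLn : ∀ x : Fin p → ℝ,
      Ln x = (1 / (n : ℝ)) * ∑ i, qHuber τ κ (b i - ∑ j, A i j * x j))
    (S : ℕ → Finset (Fin p)) (x : ℕ → Fin p → ℝ) (isel : ℕ → Fin p)
    (hx0 : x 0 = 0)
    (hSk : ∀ k : ℕ, S (k + 1) = insert (isel k) (S k))
    (hsel : ∀ k : ℕ, ∀ j : Fin p, |pder Ln (x k) j| ≤ |pder Ln (x k) (isel k)|)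
    (hsupp : ∀ k : ℕ, ∀ j ∉ S (k + 1), x (k + 1) j = 0)
    (hmin : ∀ k : ℕ, ∀ y : Fin p → ℝ, (∀ j ∉ S (k + 1), y j = 0) →
      Ln (x (k + 1)) ≤ Ln y) :
    ∀ xtil : Fin p → ℝ, ∀ ε : ℝ, 0 < ε →
      ∀ k : ℕ, (k : ℝ) ≥ 2 * (∑ j, |xtil j|) ^ 2 / (κ * ε) →
        Ln (x k) - Ln xtil ≤ ε := by
  intro xtil ε hε k hk
  obtain rfl : Ln = empiricalLoss (qHuber τ κ) A b := funext hLn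
  have hφ := hasDerivAt_qHuber hτ hκ
  have hcol' : ∀ j, ∑ i, A i j ^ 2 ≤ n := fun j =>
    (Real.sqrt_le_sqrt_iff n.cast_nonneg).1 (hcol j)
  exact IsFullyCorrectiveGreedy.sub_le_of_le_natCast ⟨hx0, hSk, hsel, hsupp, hmin⟩
    (firstOrderConvex_empiricalLoss A b hφ (qHuber_add_qHuberDeriv_mul_sub_le hτ hκ)) hκ
    (coordSmooth_empiricalLoss A b hφ hκ.le (qHuber_le_add_qHuberDeriv_mul_sub_add_sq hτ hκ)
      hcol') xtil hε hk

/-- Sublinear convergence of generalized OMP (fully corrective greedy selection) for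
the empirical quantile Huber loss: after `k ≥ 2‖x̃‖₁²/(κ ε)` iterations, the objective
gap to any reference vector `x̃` is at most `ε`. -/
theorem omp_qHuber_convergence (n p : ℕ) (τ κ : ℝ)
    (hτ : τ ∈ Set.Ioo (0 : ℝ) 1) (hκ : 0 < κ)
    (A : Matrix (Fin n) (Fin p) ℝ) (b : Fin n → ℝ)
    (hcol : ∀ j : Fin p, Real.sqrt (∑ i, (A i j) ^ 2) ≤ Real.sqrt n)
    (Ln : (Fin p → ℝ) → ℝ)
    (hLn : ∀ x : Fin p → ℝ,
      Ln x = (1 / (n : ℝ)) * ∑ i, qHuber τ κ (b i - ∑ j, A i j * x j))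
    (S : ℕ → Finset (Fin p)) (x : ℕ → Fin p → ℝ) (isel : ℕ → Fin p)
    (hS0 : S 0 = ∅) (hx0 : x 0 = 0)
    (hSk : ∀ k : ℕ, S (k + 1) = insert (isel k) (S k))
    (hsel : ∀ k : ℕ, ∀ j : Fin p, |pder Ln (x k) j| ≤ |pder Ln (x k) (isel k)|)
    (hsupp : ∀ k : ℕ, ∀ j ∉ S (k + 1), x (k + 1) j = 0)
    (hmin : ∀ k : ℕ, ∀ y : Fin p → ℝ, (∀ j ∉ S (k + 1), y j = 0) →
      Ln (x (k + 1)) ≤ Ln y) :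
    ∀ xtil : Fin p → ℝ, ∀ ε : ℝ, 0 < ε →
      ∀ k : ℕ, (k : ℝ) ≥ 2 * (∑ j, |xtil j|) ^ 2 / (κ * ε) →
        Ln (x k) - Ln xtil ≤ ε :=
  omp_qHuber_convergence_general n p τ κ hτ hκ A b hcol Ln hLn S x isel hx0 hSk hsel hsupp hmin
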